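/- Let Ǎ be the operator on smooth functions of (x,y,a₂,a₃) with x > y given by Ǎφ = 3 ∂²φ/∂y² + (2/(x−y)) ∂φ/∂x + 2 ∂φ/∂a₂ + 2y ∂φ/∂a₃. Then: (i) Ǎ Θ = 0 for Θ(x,y,a₂) = (1/5)(x−y)² − a₂; (ii) Ǎ Ξ = 2(x−y)^{−1} for Ξ(x,y) = x; and (iii) Ǎ Υ = (20/7)(x−y)^{4/3} for Υ(x,y,a₂,a₃) = (x−y)^{1/3}((2/21)x³ + (1/7)x²y + (3/7)xy² − a₃). In particular Θ is a local martingale function for the reversed chordal SLE₆ while Ξ and Υ are not. -/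

import Mathlib

noncomputable section

/-- The generator `Ǎ` of the reversed chordal SLE₆ acting on smooth functions
of `(x,y,a₂,a₃)`. -/
def Arev14 (f : ℝ → ℝ → ℝ → ℝ → ℝ) (x y a₂ a₃ : ℝ) : ℝ :=
  3 * deriv (fun y' => deriv (fun y'' => f x y'' a₂ a₃) y') y
    + 2 / (x - y) * deriv (fun x' => f x' y a₂ a₃) x
    + 2 * deriv (fun a₂' => f x y a₂' a₃) a₂
    + 2 * y * deriv (fun a₃' => f x y a₂ a₃') a₃

/-- `Θ(x,y,a₂) = (1/5)(x-y)² - a₂`, as a function of `(x,y,a₂,a₃)`. -/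
def Θ14 (x y a₂ _a₃ : ℝ) : ℝ := 1 / 5 * (x - y) ^ 2 - a₂

/-- `Ξ(x,y) = x`, as a function of `(x,y,a₂,a₃)`. -/
def Ξ14 (x _y _a₂ _a₃ : ℝ) : ℝ := x

/-- `Υ(x,y,a₂,a₃) = (x-y)^{1/3}((2/21)x³ + (1/7)x²y + (3/7)xy² - a₃)`. -/
def Υ14 (x y _a₂ a₃ : ℝ) : ℝ :=
  (x - y) ^ ((1 : ℝ) / 3)
    * (2 / 21 * x ^ 3 + 1 / 7 * x ^ 2 * y + 3 / 7 * x * y ^ 2 - a₃)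

end

open Real Filter Topology

theorem Arev14_eq_of_hasDerivAt {f : ℝ → ℝ → ℝ → ℝ → ℝ} {x y a₂ a₃ : ℝ}
    {fy : ℝ → ℝ} {fyy fx fa₂ fa₃ : ℝ}
    (hy : ∀ᶠ t in 𝓝 y, HasDerivAt (fun t => f x t a₂ a₃) (fy t) t)
    (hyy : HasDerivAt fy fyy y)
    (hx : HasDerivAt (fun t => f t y a₂ a₃) fx x)
    (ha₂ : HasDerivAt (fun t => f x y t a₃) fa₂ a₂)
    (ha₃ : HasDerivAt (fun t => f x y a₂ t) fa₃ a₃) :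
    Arev14 f x y a₂ a₃ = 3 * fyy + 2 / (x - y) * fx + 2 * fa₂ + 2 * y * fa₃ := by
  have hfy : (fun t => deriv (fun t => f x t a₂ a₃) t) =ᶠ[𝓝 y] fy :=
    hy.mono fun t ht => ht.deriv
  rw [Arev14, hfy.deriv_eq, hyy.deriv, hx.deriv, ha₂.deriv, ha₃.deriv]

theorem hasDerivAt_const_sub_rpow {c t : ℝ} (ht : t < c) (p : ℝ) :
    HasDerivAt (fun t => (c - t) ^ p) (-(p * (c - t) ^ (p - 1))) t :=
  ((hasDerivAt_id' t).const_sub c).rpow_const (Or.inl (sub_pos.2 ht).ne')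
    |>.congr_deriv (by ring)

theorem Arev14_Θ14 {x y : ℝ} (hxy : x ≠ y) (a₂ a₃ : ℝ) :
    Arev14 Θ14 x y a₂ a₃ = 0 := by
  have hy (t : ℝ) : HasDerivAt (fun t => Θ14 x t a₂ a₃) (-(2 / 5 * (x - t))) t :=
    ((((hasDerivAt_id' t).const_sub x).pow 2).const_mul (1 / 5)).sub_const a₂
      |>.congr_deriv (by push_cast; ring)
  have hyy : HasDerivAt (fun t => -(2 / 5 * (x - t))) (2 / 5) y :=
    (((hasDerivAt_id' y).const_sub x).const_mul (2 / 5)).neg.congr_deriv (by ring)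
  have hx : HasDerivAt (fun t => Θ14 t y a₂ a₃) (2 / 5 * (x - y)) x :=
    ((((hasDerivAt_id' x).sub_const y).pow 2).const_mul (1 / 5)).sub_const a₂
      |>.congr_deriv (by push_cast; ring)
  have ha₂ : HasDerivAt (fun t => Θ14 x y t a₃) (-1) a₂ :=
    (hasDerivAt_id' a₂).const_sub _
  rw [Arev14_eq_of_hasDerivAt (Eventually.of_forall hy) hyy hx ha₂ (hasDerivAt_const a₃ _)]
  field_simp [sub_ne_zero.2 hxy]
  ring

theorem Arev14_Ξ14 (x y a₂ a₃ : ℝ) : Arev14 Ξ14 x y a₂ a₃ = 2 * (x - y)⁻¹ := by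
  rw [Arev14_eq_of_hasDerivAt (Eventually.of_forall fun t => hasDerivAt_const t x)
    (hasDerivAt_const y 0) (hasDerivAt_id x) (hasDerivAt_const a₂ x) (hasDerivAt_const a₃ x)]
  ring

theorem Arev14_Υ14 {x y : ℝ} (hxy : y < x) (a₂ a₃ : ℝ) :
    Arev14 Υ14 x y a₂ a₃ = 20 / 7 * (x - y) ^ ((4 : ℝ) / 3) := by
  have hs : x - y ≠ 0 := (sub_pos.2 hxy).ne'
  set P : ℝ → ℝ := fun t => 2 / 21 * x ^ 3 + 1 / 7 * x ^ 2 * t + 3 / 7 * x * t ^ 2 - a₃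
  set P' : ℝ → ℝ := fun t => 1 / 7 * x ^ 2 + 6 / 7 * x * t
  have hP (t : ℝ) : HasDerivAt P (P' t) t :=
    ((((hasDerivAt_id' t).const_mul (1 / 7 * x ^ 2)).const_add (2 / 21 * x ^ 3)).add
      (((hasDerivAt_id' t).pow 2).const_mul (3 / 7 * x))).sub_const a₃
      |>.congr_deriv (by simp only [P']; push_cast; ring)
  have hP' : HasDerivAt P' (6 / 7 * x) y :=
    ((hasDerivAt_id' y).const_mul (6 / 7 * x)).const_add _ |>.congr_deriv (by ring)
  set fy : ℝ → ℝ := fun t => -(1 / 3) * (x - t) ^ ((1 : ℝ) / 3 - 1) * P t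
    + (x - t) ^ ((1 : ℝ) / 3) * P' t
  have hy : ∀ᶠ t in 𝓝 y, HasDerivAt (fun t => Υ14 x t a₂ a₃) (fy t) t := by
    filter_upwards [Iio_mem_nhds hxy] with t ht
    exact (hasDerivAt_const_sub_rpow ht (1 / 3)).mul (hP t) |>.congr_deriv (by ring)
  have hyy : HasDerivAt fy
      (-(1 / 3) * -(((1 : ℝ) / 3 - 1) * (x - y) ^ ((1 : ℝ) / 3 - 1 - 1)) * P y
        - 2 / 3 * (x - y) ^ ((1 : ℝ) / 3 - 1) * P' y
        + (x - y) ^ ((1 : ℝ) / 3) * (6 / 7 * x)) y :=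
    ((((hasDerivAt_const_sub_rpow hxy ((1 : ℝ) / 3 - 1)).const_mul (-(1 / 3 : ℝ))).mul
      (hP y)).add ((hasDerivAt_const_sub_rpow hxy (1 / 3)).mul hP')).congr_deriv (by ring)
  have hx : HasDerivAt (fun t => Υ14 t y a₂ a₃) (1 / 3 * (x - y) ^ ((1 : ℝ) / 3 - 1) * P y
      + (x - y) ^ ((1 : ℝ) / 3) * (2 / 7 * x ^ 2 + 2 / 7 * x * y + 3 / 7 * y ^ 2)) x := by
    have hQ : HasDerivAt (fun t => 2 / 21 * t ^ 3 + 1 / 7 * t ^ 2 * y + 3 / 7 * t * y ^ 2 - a₃)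
        (2 / 7 * x ^ 2 + 2 / 7 * x * y + 3 / 7 * y ^ 2) x :=
      (((((hasDerivAt_id' x).pow 3).const_mul (2 / 21)).add
        ((((hasDerivAt_id' x).pow 2).const_mul (1 / 7)).mul_const y)).add
        (((hasDerivAt_id' x).const_mul (3 / 7)).mul_const (y ^ 2))).sub_const a₃
        |>.congr_deriv (by push_cast; ring)
    exact ((hasDerivAt_id' x).sub_const y).rpow_const (p := 1 / 3) (Or.inl hs) |>.mul hQ
      |>.congr_deriv (by simp only [P]; ring)
  have ha₃ : HasDerivAt (fun t => Υ14 x y a₂ t) (-(x - y) ^ ((1 : ℝ) / 3)) a₃ :=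
    ((hasDerivAt_id' a₃).const_sub _).const_mul ((x - y) ^ ((1 : ℝ) / 3))
      |>.congr_deriv (by ring)
  -- each power of `x - y` is `(x - y) ^ (1 / 3)` times an integer power: the rest is rational
  rw [Arev14_eq_of_hasDerivAt hy hyy hx (hasDerivAt_const a₂ _) ha₃, rpow_sub_one hs,
    rpow_sub_one hs, show (4 : ℝ) / 3 = 1 / 3 + 1 by norm_num, rpow_add_one hs]
  simp only [P, P']
  field_simp
  ring

/-- `Ǎ Θ = 0`, `Ǎ Ξ = 2(x-y)⁻¹` and `Ǎ Υ = (20/7)(x-y)^{4/3}`: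
`Θ` is a local martingale function for the reversed chordal SLE₆ while `Ξ`, `Υ`
are not. -/
theorem stmt_14 :
    ∀ x y a₂ a₃ : ℝ, y < x →
      (Arev14 Θ14 x y a₂ a₃ = 0)
      ∧ (Arev14 Ξ14 x y a₂ a₃ = 2 * (x - y)⁻¹)
      ∧ (Arev14 Υ14 x y a₂ a₃ = 20 / 7 * (x - y) ^ ((4 : ℝ) / 3)) := by
  intro x y a₂ a₃ hxy
  exact ⟨Arev14_Θ14 hxy.ne' a₂ a₃, Arev14_Ξ14 x y a₂ a₃, Arev14_Υ14 hxy a₂ a₃⟩
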